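/- arXiv:1007.1100 — 3 statements merged into one kernel-verified Lean document; each statement's English description precedes it below -/
import Mathlib

section
/- Let N ≥ 1 be an odd integer. For any nonempty proper subsets G₁, G₂ of the station set G, the decoded bitvectors satisfy →G₁ = →G₂ if and only if G₁ = G₂. In other words, the map sending a nonempty proper subset G₀ ⊆ G to its decoded bitvector →G₀ (indexed by the C(N,(N+1)/2) columns of M_N) is injective. -/
/-- The station set is `Fin N`.  A column of the coefficient matrix `M_N` is identified
with its set `S` of `+1`-positions, a subset of the stations of cardinality `R = (N+1)/2`.
`colF G₀ S = F(G₀, c) = Σ_{r ∈ G₀} M_N(r, c)`, where the entry of column `c` in row `r`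
is `+1` if `r ∈ S` and `−1` otherwise. -/
def colF {N : ℕ} (G₀ S : Finset (Fin N)) : ℤ :=
  ∑ r ∈ G₀, (if r ∈ S then (1 : ℤ) else -1)

/-- The decoded bit `→G₀(c)` of the combination `G₀` at column `c` (with `+1`-position
set `S`): it equals `1` if `F(G₀, c) ≥ 1` and `0` if `F(G₀, c) < 1`. -/
def decodedBit {N : ℕ} (G₀ S : Finset (Fin N)) : ℕ :=
  if 1 ≤ colF G₀ S then 1 else 0

lemma colF_eq {N : ℕ} (G₀ S : Finset (Fin N)) :
    colF G₀ S = 2 * ((G₀ ∩ S).card : ℤ) - G₀.card := by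
  unfold colF
  rw [Finset.sum_ite, Finset.sum_const, Finset.sum_const]
  have h1 : G₀.filter (· ∈ S) = G₀ ∩ S := Finset.filter_mem_eq_inter
  have h2 : G₀.filter (fun x => ¬ (x ∈ S)) = G₀ \ S := by
    rw [Finset.sdiff_eq_filter]
  have h3 := Finset.card_inter_add_card_sdiff G₀ S
  rw [h1, h2]
  simp only [nsmul_eq_mul, mul_one, mul_neg_one]
  omega

lemma exists_S {N : ℕ} (G₁ G₂ : Finset (Fin N)) (α β γ δ : ℕ)
    (hα : α ≤ (G₁ \ G₂).card) (hβ : β ≤ (G₁ ∩ G₂).card)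
    (hγ : γ ≤ (G₂ \ G₁).card) (hδ : δ ≤ ((G₁ ∪ G₂)ᶜ).card) :
    ∃ S : Finset (Fin N), S.card = α + β + γ + δ ∧
      (G₁ ∩ S).card = α + β ∧ (G₂ ∩ S).card = β + γ := by
  obtain ⟨sA, hsA, hcA⟩ := Finset.exists_subset_card_eq hα
  obtain ⟨sB, hsB, hcB⟩ := Finset.exists_subset_card_eq hβ
  obtain ⟨sC, hsC, hcC⟩ := Finset.exists_subset_card_eq hγ
  obtain ⟨sD, hsD, hcD⟩ := Finset.exists_subset_card_eq hδ
  have mA : ∀ x ∈ sA, x ∈ G₁ ∧ x ∉ G₂ := fun x hx => by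
    have := hsA hx; rw [Finset.mem_sdiff] at this; exact this
  have mB : ∀ x ∈ sB, x ∈ G₁ ∧ x ∈ G₂ := fun x hx => by
    have := hsB hx; rw [Finset.mem_inter] at this; exact this
  have mC : ∀ x ∈ sC, x ∈ G₂ ∧ x ∉ G₁ := fun x hx => by
    have := hsC hx; rw [Finset.mem_sdiff] at this; exact this
  have mD : ∀ x ∈ sD, x ∉ G₁ ∧ x ∉ G₂ := fun x hx => by
    have := hsD hx; rw [Finset.mem_compl, Finset.mem_union] at this; tauto
  have dAB : Disjoint sA sB := Finset.disjoint_left.2 fun x h1 h2 => (mA x h1).2 (mB x h2).2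
  have dAC : Disjoint sA sC := Finset.disjoint_left.2 fun x h1 h2 => (mC x h2).2 (mA x h1).1
  have dAD : Disjoint sA sD := Finset.disjoint_left.2 fun x h1 h2 => (mD x h2).1 (mA x h1).1
  have dBC : Disjoint sB sC := Finset.disjoint_left.2 fun x h1 h2 => (mC x h2).2 (mB x h1).1
  have dBD : Disjoint sB sD := Finset.disjoint_left.2 fun x h1 h2 => (mD x h2).1 (mB x h1).1
  have dCD : Disjoint sC sD := Finset.disjoint_left.2 fun x h1 h2 => (mD x h2).2 (mC x h1).1
  refine ⟨sA ∪ sB ∪ sC ∪ sD, ?_, ?_, ?_⟩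
  · rw [Finset.card_union_of_disjoint (by
        simp only [Finset.disjoint_union_left]; exact ⟨⟨dAD, dBD⟩, dCD⟩),
      Finset.card_union_of_disjoint (by
        simp only [Finset.disjoint_union_left]; exact ⟨dAC, dBC⟩),
      Finset.card_union_of_disjoint dAB, hcA, hcB, hcC, hcD]
  · have e : G₁ ∩ (sA ∪ sB ∪ sC ∪ sD) = sA ∪ sB := by
      ext x
      simp only [Finset.mem_inter, Finset.mem_union]
      have hA := mA x; have hB := mB x; have hC := mC x; have hD := mD x
      constructor
      · rintro ⟨h1, ((h | h) | h) | h⟩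
        · exact Or.inl h
        · exact Or.inr h
        · exact absurd h1 (hC h).2
        · exact absurd h1 (hD h).1
      · rintro (h | h)
        · exact ⟨(hA h).1, Or.inl (Or.inl (Or.inl h))⟩
        · exact ⟨(hB h).1, Or.inl (Or.inl (Or.inr h))⟩
    rw [e, Finset.card_union_of_disjoint dAB, hcA, hcB]
  · have e : G₂ ∩ (sA ∪ sB ∪ sC ∪ sD) = sB ∪ sC := by
      ext x
      simp only [Finset.mem_inter, Finset.mem_union]
      have hA := mA x; have hB := mB x; have hC := mC x; have hD := mD x
      constructor
      · rintro ⟨h1, ((h | h) | h) | h⟩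
        · exact absurd h1 (hA h).2
        · exact Or.inl h
        · exact Or.inr h
        · exact absurd h1 (hD h).2
      · rintro (h | h)
        · exact ⟨(hB h).2, Or.inl (Or.inl (Or.inr h))⟩
        · exact ⟨(hC h).1, Or.inl (Or.inr h)⟩
    rw [e, Finset.card_union_of_disjoint dBC, hcB, hcC]

lemma exists_distinguishing {N : ℕ} (hN : Odd N) (G₁ G₂ : Finset (Fin N))
    (hlt : G₁.card < N) (hns : ¬ G₁ ⊆ G₂) :
    ∃ S : Finset (Fin N), S.card = (N + 1) / 2 ∧ decodedBit G₁ S ≠ decodedBit G₂ S := by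
  obtain ⟨m, hm⟩ := hN
  set a := (G₁ \ G₂).card with ha'
  set b := (G₁ ∩ G₂).card with hb'
  set c := (G₂ \ G₁).card with hc'
  set d := ((G₁ ∪ G₂)ᶜ).card with hd'
  have ha : 1 ≤ a := Finset.card_pos.2 (Finset.sdiff_nonempty.2 hns)
  have hab : b + a = G₁.card := Finset.card_inter_add_card_sdiff G₁ G₂
  have hbc : b + c = G₂.card := by
    rw [Finset.inter_comm] at hb'
    rw [hb', hc']; exact Finset.card_inter_add_card_sdiff G₂ G₁
  have hsum : a + b + c + d = N := by
    have h1 : (G₁ ∪ G₂).card + d = N := by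
      rw [hd']
      have := Finset.card_add_card_compl (G₁ ∪ G₂)
      simpa using this
    have h2 : (G₁ ∪ G₂).card + b = G₁.card + G₂.card :=
      Finset.card_union_add_card_inter G₁ G₂
    omega
  by_cases hE : a = 1 ∧ c = 0 ∧ b % 2 = 1
  · -- exceptional nested case: make bit₁ = 0, bit₂ = 1
    obtain ⟨S, hScard, h1, h2⟩ := exists_S G₁ G₂ 0 ((b + 1) / 2) 0
        ((N + 1) / 2 - (b + 1) / 2) (by omega) (by omega) (by omega) (by omega)
    refine ⟨S, by omega, ?_⟩
    have c1 : decodedBit G₁ S = 0 := by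
      rw [decodedBit, colF_eq, h1, if_neg (by omega)]
    have c2 : decodedBit G₂ S = 1 := by
      rw [decodedBit, colF_eq, h2, if_pos (by omega)]
    omega
  · -- main case: make bit₁ = 1, bit₂ = 0
    set β := min b ((b + c) / 2) with hβ'
    set α := min a ((N + 1) / 2 - β) with hα'
    set γ := min ((b + c) / 2 - β) ((N + 1) / 2 - α - β) with hγ'
    set δ := (N + 1) / 2 - α - β - γ with hδ'
    obtain ⟨S, hScard, h1, h2⟩ := exists_S G₁ G₂ α β γ δ
        (by omega) (by omega) (by omega) (by omega)
    refine ⟨S, by omega, ?_⟩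
    have c1 : decodedBit G₁ S = 1 := by
      rw [decodedBit, colF_eq, h1, if_pos (by omega)]
    have c2 : decodedBit G₂ S = 0 := by
      rw [decodedBit, colF_eq, h2, if_neg (by omega)]
    omega

/-- Proposition 1: for `N ≥ 1` odd and any nonempty proper subsets `G₁, G₂` of the
station set `G`, the decoded bitvectors (indexed by the columns of `M_N`, i.e. by the
subsets `S` with `|S| = (N+1)/2`) satisfy `→G₁ = →G₂` if and only if `G₁ = G₂`;
equivalently, the map `G₀ ↦ →G₀` is injective on nonempty proper subsets. -/
theorem decodedBitvector_inj (N : ℕ) (hN : Odd N) (hNpos : 1 ≤ N)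
    (G₁ G₂ : Finset (Fin N))
    (hG₁ne : G₁.Nonempty) (hG₂ne : G₂.Nonempty)
    (hG₁ : G₁ ⊂ Finset.univ) (hG₂ : G₂ ⊂ Finset.univ) :
    (∀ S : Finset (Fin N), S.card = (N + 1) / 2 →
        decodedBit G₁ S = decodedBit G₂ S) ↔ G₁ = G₂ := by
  constructor
  · intro h
    by_contra hne
    have hlt₁ : G₁.card < N := by
      have := Finset.card_lt_card hG₁
      simpa using this
    have hlt₂ : G₂.card < N := by
      have := Finset.card_lt_card hG₂
      simpa using this
    by_cases hsub : G₁ ⊆ G₂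
    · have hns : ¬ G₂ ⊆ G₁ := fun h2 => hne (Finset.Subset.antisymm hsub h2)
      obtain ⟨S, hS, hd⟩ := exists_distinguishing hN G₂ G₁ hlt₂ hns
      exact hd (h S hS).symm
    · obtain ⟨S, hS, hd⟩ := exists_distinguishing hN G₁ G₂ hlt₁ hsub
      exact hd (h S hS)
  · rintro rfl
    intro S _
    rfl
end

section
/- Let G₁, G₂ be nonempty proper subsets of the station set G with G₁ ≠ G₂, |G₂| ≤ |G₁|, and |G₁| odd. Then there exists a column c of the coefficient matrix M_N such that F(G₁, c) = 1 and F(G₂, c) ≤ 0; consequently →G₁(c) = 1 while →G₂(c) = 0, so →G₁ ≠ →G₂. -/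
/-- Case (i) of Proposition 1: for nonempty proper subsets `G₁ ≠ G₂` of the station
set with `|G₂| ≤ |G₁|` and `|G₁|` odd, there exists a column `c` of `M_N` (a subset
`S` with `|S| = (N+1)/2`) such that `F(G₁, c) = 1` and `F(G₂, c) ≤ 0`; consequently
`→G₁(c) = 1` while `→G₂(c) = 0`, and hence `→G₁ ≠ →G₂`. -/
theorem exists_separating_column_of_odd_card (N : ℕ) (hN : Odd N) (hNpos : 0 < N)
    (G₁ G₂ : Finset (Fin N))
    (hG₁ne : G₁.Nonempty) (hG₂ne : G₂.Nonempty)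
    (hG₁ : G₁ ⊂ Finset.univ) (hG₂ : G₂ ⊂ Finset.univ)
    (hne : G₁ ≠ G₂) (hcard : G₂.card ≤ G₁.card) (hodd : Odd G₁.card) :
    ∃ S : Finset (Fin N), S.card = (N + 1) / 2 ∧
      colF G₁ S = 1 ∧ colF G₂ S ≤ 0 ∧
      decodedBit G₁ S = 1 ∧ decodedBit G₂ S = 0 := by
  classical
  set k₁ := G₁.card with hk₁
  set k₂ := G₂.card with hk₂
  set m := (G₁ ∩ G₂).card with hm
  set R := (N + 1) / 2 with hR
  set a := (k₁ + 1) / 2 with ha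
  -- basic cardinality facts
  have hk₁N : k₁ < N := by
    have := Finset.card_lt_card hG₁
    simpa using this
  have hk₂N : k₂ < N := by
    have := Finset.card_lt_card hG₂
    simpa using this
  have hk₁pos : 0 < k₁ := Finset.card_pos.mpr hG₁ne
  have hk₂pos : 0 < k₂ := Finset.card_pos.mpr hG₂ne
  have hmk₂ : m ≤ k₂ := Finset.card_le_card (Finset.inter_subset_right)
  have hmk₁ : m ≤ k₁ := Finset.card_le_card (Finset.inter_subset_left)
  have hd : (G₁ \ G₂).card = k₁ - m := by
    have := Finset.card_sdiff_add_card_inter G₁ G₂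
    omega
  have hd2 : (G₂ \ G₁).card = k₂ - m := by
    have := Finset.card_sdiff_add_card_inter G₂ G₁
    rw [Finset.inter_comm] at this
    omega
  have hdpos : 1 ≤ k₁ - m := by
    by_contra h
    have hmk : m = k₁ := by omega
    have hsub : G₁ ⊆ G₂ := by
      have : G₁ ∩ G₂ = G₁ :=
        Finset.eq_of_subset_of_card_le Finset.inter_subset_left (by omega)
      intro x hx
      rw [← this] at hx
      exact (Finset.mem_inter.mp hx).2
    exact hne (Finset.eq_of_subset_of_card_le hsub hcard)
  have hu : ((G₁ ∪ G₂)ᶜ : Finset (Fin N)).card = N - (k₁ + k₂ - m) := by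
    have h1 : (G₁ ∪ G₂).card + m = k₁ + k₂ := Finset.card_union_add_card_inter G₁ G₂
    have h2 : ((G₁ ∪ G₂)ᶜ : Finset (Fin N)).card = N - (G₁ ∪ G₂).card := by
      rw [Finset.card_compl]; simp
    omega
  set u := N - (k₁ + k₂ - m) with hudef
  have hunion : k₁ + k₂ - m ≤ N := by
    have h1 : (G₁ ∪ G₂).card + m = k₁ + k₂ := Finset.card_union_add_card_inter G₁ G₂
    have h2 : (G₁ ∪ G₂).card ≤ N := by
      have := Finset.card_le_card (Finset.subset_univ (G₁ ∪ G₂))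
      simpa using this
    omega
  have hNodd : N % 2 = 1 := Nat.odd_iff.mp hN
  have hk₁odd : k₁ % 2 = 1 := Nat.odd_iff.mp hodd
  -- choose the pieces of S
  obtain ⟨A, hAsub, hAcard⟩ :=
    Finset.exists_subset_card_eq (n := min a (k₁ - m)) (s := G₁ \ G₂) (by omega)
  obtain ⟨B, hBsub, hBcard⟩ :=
    Finset.exists_subset_card_eq (n := a - min a (k₁ - m)) (s := G₁ ∩ G₂) (by omega)
  obtain ⟨C₁, hC₁sub, hC₁card⟩ :=
    Finset.exists_subset_card_eq (n := min (R - a) u) (s := (G₁ ∪ G₂)ᶜ) (by omega)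
  obtain ⟨C₂, hC₂sub, hC₂card⟩ :=
    Finset.exists_subset_card_eq (n := (R - a) - min (R - a) u) (s := G₂ \ G₁) (by omega)
  set S := A ∪ B ∪ C₁ ∪ C₂ with hS
  -- membership characterizations
  have hAG₁ : ∀ x ∈ A, x ∈ G₁ ∧ x ∉ G₂ := fun x hx => by
    have := hAsub hx; simp [Finset.mem_sdiff] at this; tauto
  have hBG : ∀ x ∈ B, x ∈ G₁ ∧ x ∈ G₂ := fun x hx => by
    have := hBsub hx; simp [Finset.mem_inter] at this; tauto
  have hC₁G : ∀ x ∈ C₁, x ∉ G₁ ∧ x ∉ G₂ := fun x hx => by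
    have := hC₁sub hx; simp [Finset.mem_compl, Finset.mem_union] at this; tauto
  have hC₂G : ∀ x ∈ C₂, x ∈ G₂ ∧ x ∉ G₁ := fun x hx => by
    have := hC₂sub hx; simp [Finset.mem_sdiff] at this; tauto
  -- disjointness
  have dAB : Disjoint A B := Finset.disjoint_left.mpr fun x hx hx' =>
    (hAG₁ x hx).2 (hBG x hx').2
  have dAC₁ : Disjoint A C₁ := Finset.disjoint_left.mpr fun x hx hx' =>
    (hC₁G x hx').1 (hAG₁ x hx).1
  have dAC₂ : Disjoint A C₂ := Finset.disjoint_left.mpr fun x hx hx' =>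
    (hC₂G x hx').2 (hAG₁ x hx).1
  have dBC₁ : Disjoint B C₁ := Finset.disjoint_left.mpr fun x hx hx' =>
    (hC₁G x hx').1 (hBG x hx).1
  have dBC₂ : Disjoint B C₂ := Finset.disjoint_left.mpr fun x hx hx' =>
    (hC₂G x hx').2 (hBG x hx).1
  have dC₁C₂ : Disjoint C₁ C₂ := Finset.disjoint_left.mpr fun x hx hx' =>
    (hC₁G x hx).2 (hC₂G x hx').1
  have hScard : S.card = R := by
    rw [hS, Finset.card_union_of_disjoint, Finset.card_union_of_disjoint,
      Finset.card_union_of_disjoint dAB]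
    · omega
    · exact Finset.disjoint_union_left.mpr ⟨dAC₁, dBC₁⟩
    · exact Finset.disjoint_union_left.mpr
        ⟨Finset.disjoint_union_left.mpr ⟨dAC₂, dBC₂⟩, dC₁C₂⟩
  -- intersections with G₁ and G₂
  have hG₁S : G₁ ∩ S = A ∪ B := by
    ext x
    simp only [hS, Finset.mem_inter, Finset.mem_union]
    constructor
    · rintro ⟨hx₁, (((h|h)|h)|h)⟩
      · exact Or.inl h
      · exact Or.inr h
      · exact absurd hx₁ (hC₁G x h).1
      · exact absurd hx₁ (hC₂G x h).2
    · rintro (h|h)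
      · exact ⟨(hAG₁ x h).1, Or.inl (Or.inl (Or.inl h))⟩
      · exact ⟨(hBG x h).1, Or.inl (Or.inl (Or.inr h))⟩
  have hG₂S : G₂ ∩ S = B ∪ C₂ := by
    ext x
    simp only [hS, Finset.mem_inter, Finset.mem_union]
    constructor
    · rintro ⟨hx₂, (((h|h)|h)|h)⟩
      · exact absurd hx₂ (hAG₁ x h).2
      · exact Or.inl h
      · exact absurd hx₂ (hC₁G x h).2
      · exact Or.inr h
    · rintro (h|h)
      · exact ⟨(hBG x h).2, Or.inl (Or.inl (Or.inr h))⟩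
      · exact ⟨(hC₂G x h).1, Or.inr h⟩
  have hG₁Scard : (G₁ ∩ S).card = a := by
    rw [hG₁S, Finset.card_union_of_disjoint dAB]; omega
  have hG₂Scard : (G₂ ∩ S).card = (a - min a (k₁ - m)) + ((R - a) - min (R - a) u) := by
    rw [hG₂S, Finset.card_union_of_disjoint dBC₂]; omega
  have hF₁ : colF G₁ S = 1 := by
    rw [colF_eq, hG₁Scard, ← hk₁]
    have h2a : 2 * a = k₁ + 1 := by omega
    omega
  have hF₂ : colF G₂ S ≤ 0 := by
    rw [colF_eq, hG₂Scard, ← hk₂]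
    have key : 2 * ((a - min a (k₁ - m)) + ((R - a) - min (R - a) u)) ≤ k₂ := by omega
    push_cast
    omega
  refine ⟨S, hScard, hF₁, hF₂, ?_, ?_⟩
  · unfold decodedBit; rw [hF₁]; norm_num
  · unfold decodedBit; rw [if_neg]; omega
end

section
/- Let G₁, G₂ be nonempty proper subsets of the station set G with G₁ ≠ G₂, |G₂| ≤ |G₁|, and |G₁| a nonzero even integer. Then there exists a column c of the coefficient matrix M_N such that F(G₁, c) = 0 and F(G₂, c) ≥ 1; consequently →G₁(c) = 0 while →G₂(c) = 1, so →G₁ ≠ →G₂. -/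
/-- Case (ii) of Proposition 1: for nonempty proper subsets `G₁ ≠ G₂` of the station
set with `|G₂| ≤ |G₁|` and `|G₁|` a nonzero even integer, there exists a column `c` of
`M_N` (a subset `S` with `|S| = (N+1)/2`) such that `F(G₁, c) = 0` and `F(G₂, c) ≥ 1`;
consequently `→G₁(c) = 0` while `→G₂(c) = 1`, and hence `→G₁ ≠ →G₂`. -/
theorem exists_separating_column_of_even_card (N : ℕ) (hN : Odd N) (hNpos : 0 < N)
    (G₁ G₂ : Finset (Fin N))
    (hG₁ne : G₁.Nonempty) (hG₂ne : G₂.Nonempty)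
    (hG₁ : G₁ ⊂ Finset.univ) (hG₂ : G₂ ⊂ Finset.univ)
    (hne : G₁ ≠ G₂) (hcard : G₂.card ≤ G₁.card)
    (heven : Even G₁.card) (hG₁card_ne : G₁.card ≠ 0) :
    ∃ S : Finset (Fin N), S.card = (N + 1) / 2 ∧
      colF G₁ S = 0 ∧ 1 ≤ colF G₂ S ∧
      decodedBit G₁ S = 0 ∧ decodedBit G₂ S = 1 := by
  classical
  set k := G₁.card with hk
  set m := G₂.card with hm
  set R := (N + 1) / 2 with hRdef
  have hRN : 2 * R = N + 1 := by
    obtain ⟨t, ht⟩ := hN; omega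
  have hk2 : k / 2 * 2 = k := Nat.div_mul_cancel heven.two_dvd
  have hkN : k < N := by
    have := Finset.card_lt_card hG₁
    simpa [Finset.card_univ] using this
  have hm1 : 1 ≤ m := hG₂ne.card_pos
  -- intersection/difference cardinalities
  set b := (G₂ ∩ G₁).card with hb
  set d := (G₂ \ G₁).card with hd
  have hbd : b + d = m := by
    rw [hb, hd, hm]
    exact Finset.card_inter_add_card_sdiff G₂ G₁
  have hdN : d ≤ N - k := by
    have h1 : (G₂ \ G₁).card ≤ G₁ᶜ.card := by
      apply Finset.card_le_card
      intro x hx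
      simp only [Finset.mem_sdiff] at hx
      simpa using hx.2
    have h2 : G₁ᶜ.card = N - k := by
      simp [Finset.card_compl, hk]
    omega
  have hd0 : d = 0 → m < k := by
    intro h0
    have hsub : G₂ ⊆ G₁ := by
      rw [← Finset.sdiff_eq_empty_iff_subset]
      exact Finset.card_eq_zero.mp h0
    exact Finset.card_lt_card (hsub.ssubset_of_ne (fun h => hne h.symm))
  -- choose A₁ ⊆ G₂ ∩ G₁
  obtain ⟨A₁, hA₁sub, hA₁card⟩ :=
    Finset.exists_subset_card_eq (n := min b (k / 2)) (s := G₂ ∩ G₁) (min_le_left _ _)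
  -- extend to T₁ ⊆ G₁ of card k/2
  obtain ⟨T₁, hAT₁, hT₁sub, hT₁card⟩ :=
    Finset.exists_subsuperset_card_eq (n := k / 2)
      (hA₁sub.trans Finset.inter_subset_right)
      (by rw [hA₁card]; exact min_le_right _ _)
      (by omega)
  -- choose A₂ ⊆ G₂ \ G₁
  obtain ⟨A₂, hA₂sub, hA₂card⟩ :=
    Finset.exists_subset_card_eq (n := min d (R - k / 2)) (s := G₂ \ G₁) (min_le_left _ _)
  -- extend to T₂ ⊆ G₁ᶜ of card R - k/2
  have hcomplcard : G₁ᶜ.card = N - k := by simp [Finset.card_compl, hk]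
  obtain ⟨T₂, hAT₂, hT₂sub, hT₂card⟩ :=
    Finset.exists_subsuperset_card_eq (n := R - k / 2) (t := G₁ᶜ)
      (fun x hx => by
        have := hA₂sub hx
        simp only [Finset.mem_sdiff] at this
        simpa using this.2)
      (by rw [hA₂card]; exact min_le_right _ _)
      (by omega)
  have hdisj : Disjoint T₁ T₂ := by
    apply Finset.disjoint_left.mpr
    intro x hx1 hx2
    exact (by simpa using hT₂sub hx2 : x ∉ G₁) (hT₁sub hx1)
  have hScard : (T₁ ∪ T₂).card = (N + 1) / 2 := by
    rw [Finset.card_union_of_disjoint hdisj, hT₁card, hT₂card]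
    omega
  have hcF1 : colF G₁ (T₁ ∪ T₂) = 0 := by
    have hG₁S : G₁ ∩ (T₁ ∪ T₂) = T₁ := by
      rw [Finset.inter_union_distrib_left]
      have h1 : G₁ ∩ T₁ = T₁ := Finset.inter_eq_right.mpr hT₁sub
      have h2 : G₁ ∩ T₂ = ∅ := by
        apply Finset.eq_empty_of_forall_notMem
        intro x hx
        simp only [Finset.mem_inter] at hx
        exact (by simpa using hT₂sub hx.2 : x ∉ G₁) hx.1
      rw [h1, h2, Finset.union_empty]
    rw [colF_eq, hG₁S, hT₁card, ← hk]
    push_cast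
    omega
  have hcF2 : 1 ≤ colF G₂ (T₁ ∪ T₂) := by
    have hdisjA : Disjoint A₁ A₂ := by
      apply Finset.disjoint_left.mpr
      intro x hx1 hx2
      have h1 := hA₁sub hx1
      have h2 := hA₂sub hx2
      simp only [Finset.mem_inter, Finset.mem_sdiff] at h1 h2
      exact h2.2 h1.2
    have hAsub : A₁ ∪ A₂ ⊆ G₂ ∩ (T₁ ∪ T₂) := by
      intro x hx
      rcases Finset.mem_union.mp hx with hx | hx
      · exact Finset.mem_inter.mpr ⟨(Finset.inter_subset_left (hA₁sub hx)),
          Finset.mem_union_left _ (hAT₁ hx)⟩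
      · exact Finset.mem_inter.mpr ⟨(Finset.sdiff_subset (hA₂sub hx)),
          Finset.mem_union_right _ (hAT₂ hx)⟩
    have hcardA : min b (k / 2) + min d (R - k / 2) ≤ (G₂ ∩ (T₁ ∪ T₂)).card := by
      calc min b (k / 2) + min d (R - k / 2) = (A₁ ∪ A₂).card := by
            rw [Finset.card_union_of_disjoint hdisjA, hA₁card, hA₂card]
        _ ≤ _ := Finset.card_le_card hAsub
    rw [colF_eq, ← hm]
    have key : m + 1 ≤ 2 * (min b (k / 2) + min d (R - k / 2)) := by omega
    have : m + 1 ≤ 2 * (G₂ ∩ (T₁ ∪ T₂)).card := le_trans key (by omega)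
    push_cast
    omega
  exact ⟨T₁ ∪ T₂, hScard, hcF1, hcF2, by simp [decodedBit, hcF1], by simp [decodedBit, hcF2]⟩
end
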